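/- Let x be a bi-infinite smooth sequence over {1,3}, let y = rec(x) be its recoding, and let w be a finite factor of y. Then: if |w| = 2k, one has |w|_A + |w|_C = |w|_B + |w|_D = k; and if |w| = 2k+1, the two numbers |w|_A + |w|_C and |w|_B + |w|_D form the set {k, k+1}. Consequently, max( | (|w|_A + |w|_C)/|w| − 1/2 | , | (|w|_B + |w|_D)/|w| − 1/2 | ) ≤ 1/|w|. -/

import Mathlib

open MeasureTheory Filter Topology
open scoped ENNReal

attribute [local instance] Classical.propDecidable

noncomputable section

/-- The shift map on bi-infinite sequences: `(S x) n = x (n+1)`. -/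
def shift {α : Type*} (x : ℤ → α) : ℤ → α := fun n => x (n + 1)

/-- Shift by an arbitrary integer amount `m`. -/
def shiftZ {α : Type*} (m : ℤ) (x : ℤ → α) : ℤ → α := fun n => x (n + m)

/-- A run structure on a bi-infinite sequence `x`: `t k` is the starting index of the
`k`-th maximal mono-symbol block of `x`, indexed so that block `0` contains position `0`. -/
structure RunStructure (x : ℤ → ℕ) where
  t : ℤ → ℤ
  mono : StrictMono t
  start_nonpos : t 0 ≤ 0
  start_pos : 0 < t 1
  const : ∀ k i : ℤ, t k ≤ i → i < t (k + 1) → x i = x (t k)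
  alt : ∀ k : ℤ, x (t (k + 1)) ≠ x (t k)

/-- `d` is the run-length derivative of `x`: `d k` is the length of the `k`-th run. -/
def IsDelta (x d : ℤ → ℕ) : Prop :=
  ∃ r : RunStructure x, ∀ k : ℤ, (d k : ℤ) = r.t (k + 1) - r.t k

/-- The run-length derivative operator `Δ` (junk value when no derivative exists). -/
def delta (x : ℤ → ℕ) : ℤ → ℕ :=
  if h : ∃ d, IsDelta x d then h.choose else fun _ => 0

/-- A bi-infinite sequence is smooth over `{1,3}` if all its iterated derivatives exist
and take values in `{1,3}`. -/
def SmoothSeq (x : ℤ → ℕ) : Prop :=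
  ∀ k : ℕ, ∀ n : ℤ, delta^[k] x n = 1 ∨ delta^[k] x n = 3

/-- The set `X` of bi-infinite smooth sequences over `{1,3}`. -/
def SmoothX : Set (ℤ → ℕ) := {x | SmoothSeq x}

/-- The recoding alphabet: `A = 1`, `B = 3`, `C = 111`, `D = 333`. -/
inductive ABCD : Type
  | A | B | C | D
deriving DecidableEq

instance : TopologicalSpace ABCD := ⊥
instance : DiscreteTopology ABCD := ⟨rfl⟩
instance : MeasurableSpace ABCD := ⊤

open ABCD

/-- The symbol (1 or 3) of the run encoded by a letter. -/
def sval : ABCD → ℕ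
  | A => 1
  | B => 3
  | C => 1
  | D => 3

/-- The length (1 or 3) of the run encoded by a letter; this is also the value of `Δx`
at the corresponding position. -/
def lval : ABCD → ℕ
  | A => 1
  | B => 1
  | C => 3
  | D => 3

/-- `y` is the recoding of `x`: the letter `y k` encodes the `k`-th run of `x`
(its symbol and its length). -/
def IsRecoding (x : ℤ → ℕ) (y : ℤ → ABCD) : Prop :=
  ∃ r : RunStructure x, ∀ k : ℤ,
    x (r.t k) = sval (y k) ∧ r.t (k + 1) - r.t k = (lval (y k) : ℤ)

/-- The recoding map `rec` (junk value when no recoding exists). -/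
def recode (x : ℤ → ℕ) : ℤ → ABCD :=
  if h : ∃ y, IsRecoding x y then h.choose else fun _ => A

/-- The set `Y = rec(X)` of recodings of smooth sequences. -/
def SmoothY : Set (ℤ → ABCD) := recode '' SmoothX

/-- The derivative operator induced on recodings: since `(Δx) i = lval (rec x i)`,
we have `Δ(rec x) = rec (Δ x) = recode (lval ∘ rec x)`. -/
def deltaY (y : ℤ → ABCD) : ℤ → ABCD := recode fun i => (lval (y i) : ℕ)

/-- `y` is well-aligned: the elementary block of `y` containing coordinate `0` starts
at position `0` (elementary blocks of `y` are exactly the runs of `Δx`, and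
`(Δx) i = lval (y i)`). -/
def WellAligned (y : ℤ → ABCD) : Prop := lval (y (-1)) ≠ lval (y 0)

/-- `B_Y^L`: the set of `y ∈ Y` such that `y, Δy, ..., Δ^{L-1} y` are all well-aligned. -/
def BY (L : ℕ) : Set (ℤ → ABCD) :=
  {y | y ∈ SmoothY ∧ ∀ l < L, WellAligned (deltaY^[l] y)}

/-- `Σ_y^L(n) = #{k ∈ [1,n] : S^k y ∈ B_Y^L}`. -/
def SigY (L : ℕ) (y : ℤ → ABCD) (n : ℕ) : ℕ :=
  ((Finset.Icc 1 n).filter fun k => shift^[k] y ∈ BY L).card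

/-- `y` contains an elementary block in `{ABA, DCD}` (for `y ∈ Y`, any such factor is
automatically an elementary block). -/
def HasType0 (y : ℤ → ABCD) : Prop :=
  ∃ i : ℤ, (y i = A ∧ y (i + 1) = B ∧ y (i + 2) = A) ∨
           (y i = D ∧ y (i + 1) = C ∧ y (i + 2) = D)

/-- `y` contains an elementary block in `{BAB, CDC}`. -/
def HasType1 (y : ℤ → ABCD) : Prop :=
  ∃ i : ℤ, (y i = B ∧ y (i + 1) = A ∧ y (i + 2) = B) ∨
           (y i = C ∧ y (i + 1) = D ∧ y (i + 2) = C)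

/-- The type of a recoded sequence: `false` = type 0, `true` = type 1. -/
def typeOf (y : ℤ → ABCD) : Bool := decide (HasType1 y)

/-- The sequence of types of the successive derivatives of a smooth sequence `x`. -/
def TypesX (x : ℤ → ℕ) : ℕ → Bool := fun n => typeOf (recode (delta^[n] x))

/-- The sequence of types of the successive derivatives of a recoded sequence `y`. -/
def TypesY (y : ℤ → ABCD) : ℕ → Bool := fun n => typeOf (deltaY^[n] y)

/-- `X_τ`: smooth bi-infinite sequences whose type sequence is exactly `τ`. -/
def Xset (τ : ℕ → Bool) : Set (ℤ → ℕ) := {x ∈ SmoothX | TypesX x = τ}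

/-- `Y_τ = rec(X_τ)`. -/
def Yset (τ : ℕ → Bool) : Set (ℤ → ABCD) := recode '' Xset τ

/-- A sequence over `{A,B,C,D}` is alternating: no two consecutive symbols in `{A,C}`
and no two consecutive symbols in `{B,D}`. -/
def Alternating (y : ℤ → ABCD) : Prop := ∀ n : ℤ, sval (y n) ≠ sval (y (n + 1))

/-- The substitutions `φ₀` and `φ₁` on letters. -/
def phiW : Bool → ABCD → List ABCD
  | false, A => [A]
  | false, B => [D]
  | false, C => [A, B, A]
  | false, D => [D, C, D]
  | true, A => [B]
  | true, B => [C]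
  | true, C => [B, A, B]
  | true, D => [C, D, C]

/-- `z` is the image of the bi-infinite sequence `y` under the substitution `φ_t`, with
the convention that the image of the letter at position `0` starts at position `0`. -/
def IsSubst (t : Bool) (y z : ℤ → ABCD) : Prop :=
  ∃ u : ℤ → ℤ, u 0 = 0 ∧
    (∀ k : ℤ, u (k + 1) = u k + (phiW t (y k)).length) ∧
    (∀ k : ℤ, ∀ j : Fin (phiW t (y k)).length, z (u k + (j : ℕ)) = (phiW t (y k)).get j)

/-- The substitution `φ_t` on bi-infinite sequences. -/
def substF (t : Bool) (y : ℤ → ABCD) : ℤ → ABCD :=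
  if h : ∃ z, IsSubst t y z then h.choose else y

/-- The composition `φ_{τ₀} ∘ φ_{τ₁} ∘ ⋯ ∘ φ_{τ_{L-1}}`. -/
def substComp (τ : ℕ → Bool) : ℕ → (ℤ → ABCD) → (ℤ → ABCD)
  | 0 => id
  | L + 1 => substF (τ 0) ∘ substComp (fun n => τ (n + 1)) L

/-- The homographies `h₀` and `h₁`. -/
def hmap : Bool → ℝ × ℝ → ℝ × ℝ
  | false, p => ((1 - p.1) / (3 - 2 * (p.1 + p.2)), (1 / 2 - p.1) / (3 - 2 * (p.1 + p.2)))
  | true, p => ((1 / 2 - p.1) / (3 - 2 * (p.1 + p.2)), (1 - p.1) / (3 - 2 * (p.1 + p.2)))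

/-- The square `K = [0,1/2] × [0,1/2]`. -/
def Ksq : Set (ℝ × ℝ) := Set.Icc (0 : ℝ) (1 / 2) ×ˢ Set.Icc (0 : ℝ) (1 / 2)

/-- The domain `E = {(a,b) ∈ K : a + b ≤ 3/4}`. -/
def Eset : Set (ℝ × ℝ) := {p ∈ Ksq | p.1 + p.2 ≤ 3 / 4}

/-- The composition `h_{t₀} ∘ h_{t₁} ∘ ⋯ ∘ h_{t_L}`. -/
def hComp (t : ℕ → Bool) : ℕ → (ℝ × ℝ → ℝ × ℝ)
  | 0 => hmap (t 0)
  | L + 1 => hComp t L ∘ hmap (t (L + 1))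

/-- The point `(a(t), b(t))`, unique point of `⋂_L (h_{t₀} ∘ ⋯ ∘ h_{t_L})(E)`. -/
def abPoint (t : ℕ → Bool) : ℝ × ℝ :=
  if h : ∃ p : ℝ × ℝ, (⋂ L : ℕ, hComp t L '' Eset) = {p} then h.choose else 0

/-- The number of occurrences of the letter `s` among positions `1, ..., m` of `z`. -/
def letterCount (s : ABCD) (z : ℤ → ABCD) (m : ℕ) : ℕ :=
  ((Finset.Icc 1 m).filter fun k => z (k : ℤ) = s).card

/-- `w` occurs as a factor of `y` at position `i`. -/
def IsFactorAt (w : List ABCD) (y : ℤ → ABCD) (i : ℤ) : Prop :=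
  ∀ j : Fin w.length, y (i + (j : ℕ)) = w.get j

/-- The cylinder set `[w]` in `{1,3}^ℤ`. -/
def cylX (w : List ℕ) : Set (ℤ → ℕ) :=
  {x | ∀ j : Fin w.length, x ((j : ℕ) : ℤ) = w.get j}

/-- The cylinder set `[w]` in `{A,B,C,D}^ℤ`. -/
def cylY (w : List ABCD) : Set (ℤ → ABCD) :=
  {y | ∀ j : Fin w.length, y ((j : ℕ) : ℤ) = w.get j}

/-- The number of occurrences of the finite word `w` in the prefix `x₀ ⋯ x_{n-1}`. -/
def occCount (x : ℤ → ℕ) (w : List ℕ) (n : ℕ) : ℕ :=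
  ((Finset.range n).filter fun i =>
    i + w.length ≤ n ∧ ∀ j : Fin w.length, x (((i + (j : ℕ) : ℕ)) : ℤ) = w.get j).card

/-- A subshift `Z` is minimal if it contains no nonempty proper closed shift-invariant
subset. -/
def ShiftMinimal {α : Type*} [TopologicalSpace α] (Z : Set (ℤ → α)) : Prop :=
  ∀ W : Set (ℤ → α), W ⊆ Z → W.Nonempty → IsClosed W → shift '' W = W → W = Z

/-! The runs of `x` alternate between the symbols `1` and `3`, so the letters of `rec x`
alternate between the classes `{A, C}` (runs of `1`s) and `{B, D}` (runs of `3`s). In any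
factor of an alternating word the two classes therefore differ in size by at most one. -/

theorem SmoothSeq.eq_one_or_eq_three {x : ℤ → ℕ} (hx : SmoothSeq x) (n : ℤ) :
    x n = 1 ∨ x n = 3 :=
  hx 0 n

theorem SmoothSeq.delta_eq_one_or_eq_three {x : ℤ → ℕ} (hx : SmoothSeq x) (n : ℤ) :
    delta x n = 1 ∨ delta x n = 3 :=
  hx 1 n

/-- Without a derivative, `delta x` is the junk value `0`, which smoothness excludes. -/
theorem SmoothSeq.isDelta_delta {x : ℤ → ℕ} (hx : SmoothSeq x) : IsDelta x (delta x) := by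
  have hex : ∃ d, IsDelta x d := by
    by_contra h
    simpa [delta, h] using hx.delta_eq_one_or_eq_three 0
  rw [delta, dif_pos hex]
  exact hex.choose_spec

theorem exists_isRecoding_of_isDelta {x d : ℤ → ℕ} (hx : ∀ n, x n = 1 ∨ x n = 3)
    (hd : IsDelta x d) (hd13 : ∀ k, d k = 1 ∨ d k = 3) : ∃ y, IsRecoding x y := by
  obtain ⟨r, hr⟩ := hd
  refine ⟨fun k => if x (r.t k) = 1 then (if d k = 1 then A else C)
    else (if d k = 1 then B else D), r, fun k => ?_⟩
  rw [← hr k]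
  rcases hx (r.t k) with h | h <;> rcases hd13 k with h' | h' <;> simp [h, h', sval, lval]

theorem SmoothSeq.isRecoding_recode {x : ℤ → ℕ} (hx : SmoothSeq x) :
    IsRecoding x (recode x) := by
  have hex := exists_isRecoding_of_isDelta hx.eq_one_or_eq_three hx.isDelta_delta
    hx.delta_eq_one_or_eq_three
  rw [recode, dif_pos hex]
  exact hex.choose_spec

theorem IsRecoding.alternating {x : ℤ → ℕ} {y : ℤ → ABCD} (h : IsRecoding x y) :
    Alternating y := by
  obtain ⟨r, hr⟩ := h
  intro k hk
  exact r.alt k (by rw [(hr (k + 1)).1, (hr k).1, hk])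

theorem Alternating.isChain_of_isFactorAt {y : ℤ → ABCD} (hy : Alternating y)
    {w : List ABCD} {i : ℤ} (hw : IsFactorAt w y i) :
    w.IsChain (fun a b => sval a ≠ sval b) := by
  refine List.isChain_iff_getElem.mpr fun j hj => ?_
  have hj0 := hw ⟨j, by omega⟩
  have hj1 := hw ⟨j + 1, hj⟩
  simp only [List.get_eq_getElem, Nat.cast_add, Nat.cast_one, ← add_assoc] at hj0 hj1
  rw [← hj0, ← hj1]
  exact hy (i + j)

theorem count_A_add_count_B_add_count_C_add_count_D (w : List ABCD) :
    w.count A + w.count B + w.count C + w.count D = w.length := by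
  induction w with
  | nil => rfl
  | cons a l ih => cases a <;> simp <;> omega

theorem count_AC_le_count_BD_succ_and_count_BD_le_count_AC_succ :
    ∀ w : List ABCD, w.IsChain (fun a b => sval a ≠ sval b) →
      w.count A + w.count C ≤ w.count B + w.count D + 1 ∧
        w.count B + w.count D ≤ w.count A + w.count C + 1
  | [] => by simp
  | [a] => by cases a <;> simp
  | a :: b :: rest => fun h => by
      obtain ⟨hab, h'⟩ := List.isChain_cons_cons.mp h
      have ih := count_AC_le_count_BD_succ_and_count_BD_le_count_AC_succ rest h'.tail
      cases a <;> cases b <;> simp_all [sval] <;> omega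

theorem abs_div_sub_half_le_inv {a n : ℕ} (hn : 0 < n) (ha : 2 * a ≤ n + 1)
    (ha' : n ≤ 2 * a + 1) : |(a : ℝ) / n - 1 / 2| ≤ 1 / n := by
  have hn' : (0 : ℝ) < n := by exact_mod_cast hn
  have h1 : (2 * a : ℝ) ≤ n + 1 := by exact_mod_cast ha
  have h2 : (n : ℝ) ≤ 2 * a + 1 := by exact_mod_cast ha'
  calc |(a : ℝ) / n - 1 / 2| = |2 * (a : ℝ) - n| / (2 * n) := by
        rw [← abs_of_pos (by positivity : (0 : ℝ) < 2 * n), ← abs_div]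
        congr 1
        field_simp
    _ ≤ 1 / (2 * n) := by gcongr; exact abs_le.mpr ⟨by linarith, by linarith⟩
    _ ≤ 1 / n := by gcongr; linarith

/-- Lemma on counts of letters in factors of recodings.
If `x` is a bi-infinite smooth sequence over `{1,3}`, `y = rec x` its recoding and `w`
a (nonempty) finite factor of `y`, then `|w|_A + |w|_C = |w|_B + |w|_D = k` when
`|w| = 2k`, `{|w|_A + |w|_C, |w|_B + |w|_D} = {k, k+1}` when `|w| = 2k+1`, and
consequently both aggregated frequencies are within `1/|w|` of `1/2`. -/
theorem stmt0 (x : ℤ → ℕ) (hx : x ∈ SmoothX) (w : List ABCD) (hw : w ≠ [])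
    (hfac : ∃ i : ℤ, IsFactorAt w (recode x) i) :
    (∀ k : ℕ, w.length = 2 * k →
      w.count A + w.count C = k ∧ w.count B + w.count D = k) ∧
    (∀ k : ℕ, w.length = 2 * k + 1 →
      ({w.count A + w.count C, w.count B + w.count D} : Set ℕ) = {k, k + 1}) ∧
    max |((w.count A + w.count C : ℝ)) / (w.length : ℝ) - 1 / 2|
        |((w.count B + w.count D : ℝ)) / (w.length : ℝ) - 1 / 2| ≤ 1 / (w.length : ℝ) := by
  obtain ⟨i, hi⟩ := hfac
  have hbal := count_AC_le_count_BD_succ_and_count_BD_le_count_AC_succ w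
    ((SmoothSeq.isRecoding_recode hx).alternating.isChain_of_isFactorAt hi)
  have htot := count_A_add_count_B_add_count_C_add_count_D w
  have hlen : 0 < w.length := List.length_pos_iff.mpr hw
  refine ⟨fun k hk => by omega, fun k hk => ?_, ?_⟩
  · rcases (by omega : (w.count A + w.count C = k ∧ w.count B + w.count D = k + 1) ∨
        (w.count A + w.count C = k + 1 ∧ w.count B + w.count D = k)) with ⟨h, h'⟩ | ⟨h, h'⟩
    · rw [h, h']
    · rw [h, h', Set.pair_comm]
  · exact_mod_cast max_le (abs_div_sub_half_le_inv hlen (by omega) (by omega))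
      (abs_div_sub_half_le_inv hlen (by omega) (by omega))
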